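/- For every s ≥ 1, the hat guessing game on the path P_s (on s vertices v₁,...,v_s) is winning where each vertex vᵢ with i < s has hatness 4s−2, vertex v_s has hatness 2s−1, and every vertex makes s guesses. -/

import Mathlib

/-!
Number the vertices `0, …, s-1`, identify colours with elements of the group
`ℤ/2 × ℤ/(2s-1) ≅ ℤ/(4s-2)` and fix sets `A₀, …, A_{s-2}`. Vertex `v` guesses the colours `x`
with `x - c(v+1) ∈ A_v`, except those with `c(v-1) - x ∈ A_{v-1}`. If every guess were wrong,
the last vertex would force `c(s-2) - c(s-1) ∈ A_{s-2}`, and inductively `c(v) - c(v+1) ∈ A_v`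
down to `v = 0`, whose guess is then right.

Vertex `v` makes `|A_v| - #{a ∈ A_v | w - a ∈ A_{v-1}}` guesses, where `w = c(v-1) - c(v+1)`, so
it suffices that `|A_v| ≤ s + v` and every `w` is a sum `a + b` (`a ∈ A_v`, `b ∈ A_{v-1}`) at least
`v` times. Take `A_v = ℤ/2 × {0, 2, …, 2k-2}` if `s + v = 2k` and `A_v = {0} × [0, s+v)` if `s + v`
is odd. Counting sums then amounts to counting the terms of an arithmetic progression of step `2`
in `ℤ/(2s-1)` that fall into an arc of length `2(s-k)`: they have consecutive indices, so there
are at most `s - k` of them. The last vertex has `2s-1` colours, one in each class mod `2s-1`,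
and `A_{s-2} = ℤ/2 × D` with `|D| = s-1` rules out `s-1` of them.
-/

/-- A winning strategy in the hat guessing game `⟨G, h, g⟩`: each sage `v` deterministically
outputs at most `g v` guesses depending only on the hat colors of its neighbors, and for
every hat assignment (with `c v < h v`) some sage's guess set contains its own color. -/
def HatWinning {V : Type*} (G : SimpleGraph V) (h g : V → ℕ) : Prop :=
  ∃ σ : V → (V → ℕ) → Finset ℕ,
    (∀ v c c', (∀ u, G.Adj v u → c u = c' u) → σ v c = σ v c') ∧
    (∀ v c, (σ v c).card ≤ g v) ∧
    ∀ c : V → ℕ, (∀ v, c v < h v) → ∃ v, c v ∈ σ v c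

/-- The hat guessing game played by the sages occupying the vertices of `S` only
(the game on the induced subgraph `G[S]`). -/
def HatWinningOn {V : Type*} (G : SimpleGraph V) (S : Set V) (h g : V → ℕ) : Prop :=
  ∃ σ : V → (V → ℕ) → Finset ℕ,
    (∀ v ∈ S, ∀ c c', (∀ u ∈ S, G.Adj v u → c u = c' u) → σ v c = σ v c') ∧
    (∀ v ∈ S, ∀ c, (σ v c).card ≤ g v) ∧
    ∀ c : V → ℕ, (∀ v ∈ S, c v < h v) → ∃ v ∈ S, c v ∈ σ v c

open Finset

section Cascade

variable {G : Type*} [AddGroupWithOne G] [DecidableEq G] {n : ℕ}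

def cascadeStrategy (A : ℕ → Finset G) (h : Fin (n + 1) → ℕ) (v : Fin (n + 1))
    (c : Fin (n + 1) → ℕ) : Finset ℕ :=
  (range (h v)).filter fun x =>
    (v ≠ Fin.last n → (x : G) - c (v + 1) ∈ A v) ∧ (v ≠ 0 → (c (v - 1) : G) - x ∉ A (v - 1 : ℕ))

theorem cascadeStrategy_congr {A : ℕ → Finset G} {h : Fin (n + 1) → ℕ} {v : Fin (n + 1)}
    {c c' : Fin (n + 1) → ℕ} (hc : ∀ u, (SimpleGraph.pathGraph (n + 1)).Adj v u → c u = c' u) :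
    cascadeStrategy A h v c = cascadeStrategy A h v c' := by
  refine filter_congr fun _ _ => ?_
  have hsucc : v ≠ Fin.last n → c (v + 1) = c' (v + 1) := fun hv =>
    hc _ (SimpleGraph.pathGraph_adj.2
      (.inl (Fin.val_add_one_of_lt (Fin.lt_last_iff_ne_last.2 hv)).symm))
  have hpred : v ≠ 0 → c (v - 1) = c' (v - 1) := fun hv => by
    have hpos := Fin.pos_iff_ne_zero.2 hv
    refine hc _ (SimpleGraph.pathGraph_adj.2 (.inr ?_))
    rw [Fin.coe_sub_one, if_neg hv]
    omega
  exact and_congr (imp_congr_right fun hv => by rw [hsucc hv])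
    (imp_congr_right fun hv => by rw [hpred hv])

theorem exists_mem_cascadeStrategy (A : ℕ → Finset G) (h : Fin (n + 1) → ℕ)
    (c : Fin (n + 1) → ℕ) (hc : ∀ v, c v < h v) : ∃ v, c v ∈ cascadeStrategy A h v c := by
  by_contra! hwrong
  have hwrong' : ∀ v, ¬((v ≠ Fin.last n → (c v : G) - c (v + 1) ∈ A v) ∧
      (v ≠ 0 → (c (v - 1) : G) - c v ∉ A (v - 1 : ℕ))) := fun v hv =>
    hwrong v (mem_filter.2 ⟨mem_range.2 (hc v), hv⟩)
  have hchain : ∀ j : Fin (n + 1), j ≠ Fin.last n → (c j : G) - c (j + 1) ∈ A j := by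
    intro j
    induction j using Fin.reverseInduction with
    | last => exact fun hlast => (hlast rfl).elim
    | cast i ih =>
      intro _
      have hpred : i.succ - 1 = i.castSucc := by rw [← Fin.coeSucc_eq_succ, add_sub_cancel_right]
      by_contra hnot
      refine hwrong' i.succ ⟨ih, fun _ => ?_⟩
      simpa [hpred, Fin.coeSucc_eq_succ] using hnot
  exact hwrong' 0 ⟨hchain 0, fun h0 => (h0 rfl).elim⟩

theorem hatWinning_pathGraph_of_card_cascadeStrategy_le (A : ℕ → Finset G)
    (h g : Fin (n + 1) → ℕ) (hcard : ∀ v c, #(cascadeStrategy A h v c) ≤ g v) :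
    HatWinning (SimpleGraph.pathGraph (n + 1)) h g :=
  ⟨cascadeStrategy A h, fun _ _ _ => cascadeStrategy_congr, hcard, exists_mem_cascadeStrategy A h⟩

end Cascade

section Counting

variable {G : Type*} [AddCommGroup G] [Fintype G] [DecidableEq G]

theorem card_filter_sub_mem_and (A : Finset G) (y : G) (p : G → Prop) [DecidablePred p] :
    #{x | x - y ∈ A ∧ p x} = #{a ∈ A | p (y + a)} :=
  card_nbij' (· - y) (y + ·) (by intro x hx; simp_all) (by intro a ha; simp_all)
    (fun x _ => by simp) (fun a _ => by simp)

omit [Fintype G] in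
theorem card_filter_sub_mem_comm (A B : Finset G) (w : G) :
    #{a ∈ A | w - a ∈ B} = #{b ∈ B | w - b ∈ A} :=
  card_nbij' (w - ·) (w - ·) (by intro a ha; simp_all) (by intro b hb; simp_all)
    (fun a _ => sub_sub_cancel w a) (fun b _ => sub_sub_cancel w b)

theorem card_filter_sub_mem (B : Finset G) (w : G) : #{x | w - x ∈ B} = #B := by
  simpa using card_filter_sub_mem_comm univ B w

theorem card_filter_sub_mem_and_not_add (A B : Finset G) (y z : G) :
    #{x | x - y ∈ A ∧ z - x ∉ B} + #{a ∈ A | z - y - a ∈ B} = #A := by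
  rw [card_filter_sub_mem_and, add_comm]
  simp_rw [← sub_sub]
  exact card_filter_add_card_filter_not _

theorem card_filter_prod_sub_mem {K H : Type*} [AddCommGroup K] [Fintype K] [DecidableEq K]
    [AddCommGroup H] [DecidableEq H] (I J : Finset H) (w : K × H) :
    #{a ∈ (univ : Finset K) ×ˢ I | w - a ∈ ({0} : Finset K) ×ˢ J} = #{t ∈ I | w.2 - t ∈ J} := by
  have hfilter : {a ∈ (univ : Finset K) ×ˢ I | w - a ∈ ({0} : Finset K) ×ˢ J} =
      {w.1} ×ˢ {t ∈ I | w.2 - t ∈ J} := by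
    ext ⟨a, b⟩
    simp only [mem_filter, mem_product, mem_univ, mem_singleton, Prod.fst_sub, Prod.snd_sub,
      sub_eq_zero]
    tauto
  rw [hfilter, card_product, card_singleton, one_mul]

theorem card_filter_range_le_of_injOn {β : Type*} [Fintype β] {e : ℕ → β} {N : ℕ}
    (he : Set.InjOn e (Set.Iio N)) (p : β → Prop) [DecidablePred p] :
    #{x ∈ range N | p (e x)} ≤ #{y | p y} :=
  card_le_card_of_injOn e (fun x hx => by simp_all)
    (he.mono fun x hx => by simpa using (mem_filter.1 hx).1)

end Counting

section Residues

def doubledRange (N m : ℕ) : Finset (ZMod N) := (range m).image fun t => ((2 * t : ℕ) : ZMod N)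

def initialArc (N L : ℕ) [NeZero N] : Finset (ZMod N) := {x | x.val < L}

variable {n : ℕ}

theorem injOn_two_mul_natCast {m : ℕ} (hm : m ≤ n + 1) :
    Set.InjOn (fun t : ℕ => ((2 * t : ℕ) : ZMod (2 * n + 1))) (range m) := by
  intro t ht t' ht' htt
  simp only [coe_range, Set.mem_Iio] at ht ht'
  have := congrArg ZMod.val htt
  rw [ZMod.val_natCast_of_lt (by omega), ZMod.val_natCast_of_lt (by omega)] at this
  omega

theorem card_doubledRange {m : ℕ} (hm : m ≤ n + 1) : #(doubledRange (2 * n + 1) m) = m := by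
  rw [doubledRange, card_image_of_injOn (injOn_two_mul_natCast hm), card_range]

theorem card_filter_sub_not_mem_doubledRange (z : ZMod (2 * n + 1)) :
    #{y | z - y ∉ doubledRange _ n} = n + 1 := by
  have := card_filter_add_card_filter_not (s := univ) fun y => z - y ∈ doubledRange _ n
  rw [card_filter_sub_mem, card_doubledRange (by omega), card_univ, ZMod.card] at this
  omega

theorem card_initialArc_le (N L : ℕ) [NeZero N] : #(initialArc N L) ≤ L :=
  (card_le_card_of_injOn ZMod.val (fun x hx => by simpa [initialArc] using hx)
    (ZMod.val_injective N).injOn).trans (card_range L).le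

theorem val_natCast_sub_natCast {N W t : ℕ} [NeZero N] (hW : W < N) (ht : t ≤ N) :
    ((W : ZMod N) - t).val = if t ≤ W then W - t else W + N - t := by
  split_ifs with htW
  · rw [← Nat.cast_sub htW, ZMod.val_natCast_of_lt (by omega)]
  · rw [← add_zero (W : ZMod N), ← ZMod.natCast_self N, ← Nat.cast_add, ← Nat.cast_sub (by omega),
      ZMod.val_natCast_of_lt (by omega)]

theorem add_le_card_filter_doubledRange {m k : ℕ} (hmk : m ≤ k) (hk : k ≤ n + 1)
    (u : ZMod (2 * n + 1)) :
    m + k ≤ n + 1 + #{t ∈ doubledRange (2 * n + 1) m | u - t ∈ initialArc _ (2 * k - 1)} := by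
  rw [doubledRange, filter_image, card_image_of_injOn ((injOn_two_mul_natCast (by omega)).mono
    (filter_subset _ _))]
  obtain ⟨W, hW, rfl⟩ : ∃ W < 2 * n + 1, (W : ZMod (2 * n + 1)) = u :=
    ⟨u.val, ZMod.val_lt u, ZMod.natCast_zmod_val u⟩
  -- the `t` with `W - 2t` outside the arc lie among `n + 1 - k` consecutive integers
  set lo := if 2 * k - 1 ≤ W then 0 else W / 2 + 1
  have hbad : {t ∈ range m | ¬ (W : ZMod (2 * n + 1)) - (2 * t : ℕ) ∈ initialArc _ (2 * k - 1)} ⊆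
      Ico lo (lo + (n + 1 - k)) := by
    intro t ht
    simp only [mem_filter, mem_range, initialArc, mem_univ, true_and] at ht
    rw [val_natCast_sub_natCast hW (by omega)] at ht
    simp only [mem_Ico, lo]
    split_ifs at ht ⊢ <;> omega
  have hbad_card := card_le_card hbad
  have hsplit := card_filter_add_card_filter_not (s := range m)
    (fun t : ℕ => (W : ZMod (2 * n + 1)) - (2 * t : ℕ) ∈ initialArc _ (2 * k - 1))
  rw [Nat.card_Ico] at hbad_card
  rw [card_range] at hsplit
  omega

end Residues

section PathSets

variable {n : ℕ}

def pathSets (n i : ℕ) : Finset (ZMod 2 × ZMod (2 * n + 1)) :=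
  if (n + 1 + i) % 2 = 0 then univ ×ˢ doubledRange _ ((n + 1 + i) / 2)
  else {0} ×ˢ initialArc _ (n + 1 + i)

theorem pathSets_of_even {i k : ℕ} (h : n + 1 + i = 2 * k) :
    pathSets n i = univ ×ˢ doubledRange _ k := by
  rw [pathSets, if_pos (by omega), show (n + 1 + i) / 2 = k by omega]

theorem pathSets_of_odd {i k : ℕ} (h : n + 1 + i = 2 * k - 1) (hk : 0 < k) :
    pathSets n i = {0} ×ˢ initialArc _ (2 * k - 1) := by
  rw [pathSets, if_neg (by omega), h]

theorem card_pathSets_le (i : ℕ) : #(pathSets n i) ≤ n + 1 + i := by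
  rw [pathSets]
  split_ifs
  · rw [card_product, card_univ, ZMod.card]
    have : #(doubledRange (2 * n + 1) ((n + 1 + i) / 2)) ≤ (n + 1 + i) / 2 :=
      card_image_le.trans (card_range _).le
    omega
  · rw [card_product, card_singleton, one_mul]
    exact card_initialArc_le _ _

theorem le_card_filter_sub_mem_pathSets {i : ℕ} (hi : 0 < i) (hin : i < n)
    (w : ZMod 2 × ZMod (2 * n + 1)) :
    i ≤ #{a ∈ pathSets n i | w - a ∈ pathSets n (i - 1)} := by
  obtain ⟨k, hk | ⟨hk, hk0⟩⟩ : ∃ k, n + 1 + i = 2 * k ∨ n + 1 + i = 2 * k - 1 ∧ 0 < k :=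
    ⟨(n + 2 + i) / 2, by omega⟩
  · rw [pathSets_of_even hk, pathSets_of_odd (k := k) (by omega) (by omega),
      card_filter_prod_sub_mem]
    have := add_le_card_filter_doubledRange (m := k) (k := k) le_rfl (by omega) w.2
    omega
  · rw [pathSets_of_odd hk hk0, pathSets_of_even (k := k - 1) (by omega),
      card_filter_sub_mem_comm, card_filter_prod_sub_mem]
    have := add_le_card_filter_doubledRange (m := k - 1) (k := k) (by omega) (by omega) w.2
    omega

end PathSets

section PathStrategy

variable {n : ℕ}

def pathHatness (n : ℕ) (v : Fin (n + 1)) : ℕ :=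
  if v = Fin.last n then 2 * n + 1 else 2 * (2 * n + 1)

theorem card_cascadeStrategy_last_le (c : Fin (n + 1) → ℕ) :
    #(cascadeStrategy (pathSets n) (pathHatness n) (Fin.last n) c) ≤ n + 1 := by
  rcases Nat.eq_zero_or_pos n with rfl | hn
  · exact (card_filter_le _ _).trans (by simp [pathHatness])
  have hA : pathSets n (n - 1) = univ ×ˢ doubledRange _ n := pathSets_of_even (by omega)
  have hlast : Fin.last n ≠ 0 := by simp [Fin.ext_iff]; omega
  simp only [cascadeStrategy, pathHatness, if_true, ne_eq, not_true_eq_false, false_implies,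
    true_and, hlast, not_false_eq_true, forall_const, Fin.val_last, hA, mem_product, mem_univ,
    Prod.snd_sub, Prod.snd_natCast]
  exact (card_filter_range_le_of_injOn (CharP.natCast_injOn_Iio _ _) _).trans
    (card_filter_sub_not_mem_doubledRange _).le

theorem card_filter_sub_mem_pathSets_le {v : ℕ} (hv : v < n) (y z : ZMod 2 × ZMod (2 * n + 1)) :
    #{g | g - y ∈ pathSets n v ∧ (v ≠ 0 → z - g ∉ pathSets n (v - 1))} ≤ n + 1 := by
  have hcard := card_pathSets_le (n := n) v
  rcases Nat.eq_zero_or_pos v with rfl | hpos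
  · exact (card_filter_sub_mem_and _ _ _).trans_le ((card_filter_le _ _).trans hcard)
  · simp only [ne_eq, hpos.ne', not_false_eq_true, forall_const]
    have := card_filter_sub_mem_and_not_add (pathSets n v) (pathSets n (v - 1)) y z
    have := le_card_filter_sub_mem_pathSets hpos hv (z - y)
    omega

theorem card_cascadeStrategy_le_of_ne_last {v : Fin (n + 1)} (hv : v ≠ Fin.last n)
    (c : Fin (n + 1) → ℕ) :
    #(cascadeStrategy (pathSets n) (pathHatness n) v c) ≤ n + 1 := by
  have hinj : Set.InjOn (Nat.cast : ℕ → ZMod 2 × ZMod (2 * n + 1)) (Set.Iio (2 * (2 * n + 1))) := by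
    have := CharP.natCast_injOn_Iio (ZMod 2 × ZMod (2 * n + 1)) (Nat.lcm 2 (2 * n + 1))
    rwa [Nat.Coprime.lcm_eq_mul (by simp)] at this
  simp only [cascadeStrategy, pathHatness, ne_eq, hv, not_false_eq_true, forall_const,
    ← Fin.val_eq_zero_iff]
  exact (card_filter_range_le_of_injOn hinj _).trans
    (card_filter_sub_mem_pathSets_le (Fin.val_lt_last hv) _ _)

theorem card_cascadeStrategy_pathSets_le (v : Fin (n + 1)) (c : Fin (n + 1) → ℕ) :
    #(cascadeStrategy (pathSets n) (pathHatness n) v c) ≤ n + 1 := by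
  by_cases hv : v = Fin.last n
  · subst hv
    exact card_cascadeStrategy_last_le c
  · exact card_cascadeStrategy_le_of_ne_last hv c

end PathStrategy

theorem path_P_s_winning (s : ℕ) (hs : 1 ≤ s) :
    HatWinning (SimpleGraph.pathGraph s)
      (fun i => if (i : ℕ) = s - 1 then 2 * s - 1 else 4 * s - 2) (fun _ => s) := by
  obtain ⟨n, rfl⟩ := Nat.exists_eq_add_of_le' hs
  have hhat : (fun i : Fin (n + 1) =>
      if (i : ℕ) = n + 1 - 1 then 2 * (n + 1) - 1 else 4 * (n + 1) - 2) = pathHatness n := by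
    funext i
    simp only [pathHatness, Fin.ext_iff, Fin.val_last]
    split_ifs <;> omega
  rw [hhat]
  exact hatWinning_pathGraph_of_card_cascadeStrategy_le (pathSets n) _ _
    card_cascadeStrategy_pathSets_le
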